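/- arXiv:math/0604438 — 4 statements merged into one kernel-verified Lean document; each statement's English description precedes it below -/
import Mathlib

section
/- Let c be a prime number, q ∈ ℕ with q ≥ 1, and d = c^q. Then every hypergraph H satisfies disc(Δ^d H, c) ≤ disc(H, c). -/
/-- The Stirling numbers of the second kind: `stirling2 d k` is the number of
partitions of a `d`-element set into `k` nonempty parts. -/
def stirling2 : ℕ → ℕ → ℕ
  | 0, 0 => 1
  | 0, _ + 1 => 0
  | _ + 1, 0 => 0
  | d + 1, k + 1 => (k + 1) * stirling2 d (k + 1) + stirling2 d k

/-- The discrepancy of a `c`-coloring `χ` of the hypergraph with edge set `H`. -/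
noncomputable def discCol {V : Type} (H : Finset (Finset V)) (c : ℕ) (χ : V → Fin c) : ℝ :=
  ⨆ E ∈ H, ⨆ i : Fin c, |((E.filter fun v => χ v = i).card : ℝ) - (E.card : ℝ) / (c : ℝ)|

/-- The `c`-color discrepancy of the hypergraph with edge set `H`. -/
noncomputable def disc {V : Type} (H : Finset (Finset V)) (c : ℕ) : ℝ :=
  ⨅ χ : V → Fin c, discCol H c χ

/-- The `d`-fold symmetric product of a hypergraph: edge set `{E^d : E ∈ H}`
on the vertex set `V^d`. -/
def symProd {V : Type} [DecidableEq V] (H : Finset (Finset V)) (d : ℕ) :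
    Finset (Finset (Fin d → V)) :=
  H.image fun E => Fintype.piFinset fun _ : Fin d => E

set_option linter.unusedSectionVars false
open Fin.NatCast Fin.CommRing
section
variable {V : Type} [DecidableEq V] (d : ℕ) [NeZero d]

def rot (t : ℕ) (v : Fin d → V) : Fin d → V := fun j => v (j + (t : Fin d))

variable {d}
lemma rot_rot (s t : ℕ) (v : Fin d → V) : rot d s (rot d t v) = rot d (s + t) v := by
  funext j
  simp [rot, Nat.cast_add, add_assoc, add_comm (s : Fin d) (t : Fin d)]

lemma rot_zero (v : Fin d → V) : rot d 0 v = v := by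
  funext j; simp [rot]

lemma rot_of_dvd {t : ℕ} (h : d ∣ t) (v : Fin d → V) : rot d t v = v := by
  funext j
  have : (t : Fin d) = 0 := by
    ext
    simp [Fin.val_natCast, Nat.eq_zero_of_dvd_of_lt, Nat.mod_eq_zero_of_dvd h]
  simp [rot, this]

lemma exists_period (v : Fin d → V) : ∃ t, 0 < t ∧ rot d t v = v :=
  ⟨d, NeZero.pos d, rot_of_dvd dvd_rfl v⟩

/-- the minimal period of `v` under rotation -/
noncomputable def period (v : Fin d → V) : ℕ := Nat.find (exists_period v)

lemma period_pos (v : Fin d → V) : 0 < period v := (Nat.find_spec (exists_period v)).1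

lemma rot_period (v : Fin d → V) : rot d (period v) v = v := (Nat.find_spec (exists_period v)).2

lemma rot_eq_self_iff (v : Fin d → V) (t : ℕ) : rot d t v = v ↔ period v ∣ t := by
  constructor
  · intro h
    by_contra hnd
    have hm : t % period v ≠ 0 := fun h0 => hnd (Nat.dvd_of_mod_eq_zero h0)
    have hlt : t % period v < period v := Nat.mod_lt _ (period_pos v)
    unfold period at hlt
    refine Nat.find_min (exists_period v) hlt ⟨Nat.pos_of_ne_zero hm, ?_⟩
    -- rot (t % p) v = v
    have hmul : ∀ k, rot d (period v * k) v = v := by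
      intro k
      induction k with
      | zero => simpa using rot_zero v
      | succ n ih =>
        have := rot_rot (period v) (period v * n) v
        rw [ih, rot_period] at this
        rw [mul_add, mul_one, add_comm]
        exact this.symm
    have := rot_rot (t % period v) (period v * (t / period v)) v
    rw [hmul] at this
    rw [Nat.mod_add_div t (period v)] at this
    show rot d (t % period v) v = v
    rw [this, h]
  · rintro ⟨k, rfl⟩
    induction k with
    | zero => simpa using rot_zero v
    | succ n ih =>
      have := rot_rot (period v) (period v * n) v
      rw [ih, rot_period] at this
      rw [mul_add, mul_one, add_comm]
      exact this.symm

lemma period_dvd (v : Fin d → V) : period v ∣ d :=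
  (rot_eq_self_iff v d).1 (rot_of_dvd dvd_rfl v)

lemma rot_eq_rot_iff_mod (v : Fin d → V) {a b : ℕ} (h : rot d a v = rot d b v) :
    a % period v = b % period v := by
  have hble : b ≤ d * (b + 1) := le_trans (Nat.le_succ b) (Nat.le_mul_of_pos_left _ (NeZero.pos d))
  set t := d * (b + 1) - b with ht
  have htb : b + t = d * (b + 1) := by omega
  have h1 : rot d (t + a) v = rot d (t + b) v := by
    rw [← rot_rot, ← rot_rot, h]
  have h2 : rot d (t + b) v = v := by
    rw [add_comm, htb]; exact rot_of_dvd ⟨b + 1, rfl⟩ v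
  have hpa : period v ∣ t + a := (rot_eq_self_iff v _).1 (h1.trans h2)
  have hpb : period v ∣ t + b := (rot_eq_self_iff v _).1 h2
  have : a ≡ b [MOD period v] := by
    have := (Nat.modEq_zero_iff_dvd.2 hpa).trans (Nat.modEq_zero_iff_dvd.2 hpb).symm
    exact Nat.ModEq.add_left_cancel' t this
  exact this
end
section
variable {V : Type} [DecidableEq V] {d : ℕ} [NeZero d]

/-- `v` is a constant tuple -/
def Cst (v : Fin d → V) : Prop := ∀ j, v j = v 0

instance (v : Fin d → V) : Decidable (Cst v) := by unfold Cst; infer_instance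

lemma cst_rot {v : Fin d → V} (h : Cst v) (t : ℕ) : Cst (rot d t v) := by
  intro j
  show v (j + (t : Fin d)) = v (0 + (t : Fin d))
  rw [h (j + (t : Fin d)), h (0 + (t : Fin d))]

lemma cst_of_period_eq_one {v : Fin d → V} (h : period v = 1) : Cst v := by
  have h1 : rot d 1 v = v := by
    have := rot_period v; rwa [h] at this
  have key : ∀ t : ℕ, v ((t : ℕ) : Fin d) = v 0 := by
    intro t
    induction t with
    | zero => simp
    | succ n ih =>
      have : v ((n : Fin d) + 1) = v (n : Fin d) := congrFun h1 (n : Fin d)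
      rw [← ih, ← this]
      congr 1
      push_cast
      ring
  intro j
  have := key j.val
  rwa [Fin.cast_val_eq_self] at this

/-- the orbit equivalence relation under rotation -/
def orbSetoid (V : Type) [DecidableEq V] (d : ℕ) [NeZero d] : Setoid (Fin d → V) where
  r v w := ∃ t, rot d t v = w
  iseqv := by
    constructor
    · exact fun v => ⟨0, rot_zero v⟩
    · rintro v w ⟨t, rfl⟩
      refine ⟨d * (t + 1) - t, ?_⟩
      rw [rot_rot]
      have : d * (t + 1) - t + t = d * (t + 1) := by
        have : t ≤ d * (t + 1) := le_trans (Nat.le_succ t) (Nat.le_mul_of_pos_left _ (NeZero.pos d))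
        omega
      rw [this]
      exact rot_of_dvd ⟨t + 1, rfl⟩ v
    · rintro u v w ⟨s, rfl⟩ ⟨t, rfl⟩
      exact ⟨t + s, (rot_rot t s u).symm⟩

/-- a canonical representative of the orbit of `v` -/
noncomputable def rep (v : Fin d → V) : Fin d → V :=
  (Quotient.mk (orbSetoid V d) v).out

lemma exists_rot_rep (v : Fin d → V) : ∃ t, rot d t (rep v) = v :=
  Quotient.mk_out (s := orbSetoid V d) v

lemma rep_rot_one (v : Fin d → V) : rep (rot d 1 v) = rep v := by
  unfold rep
  exact congrArg Quotient.out (Quotient.sound (s := orbSetoid V d) ⟨1, rfl⟩).symm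

/-- index of `v` within its orbit -/
noncomputable def idx (v : Fin d → V) : ℕ := Nat.find (exists_rot_rep v)

lemma rot_idx (v : Fin d → V) : rot d (idx v) (rep v) = v := Nat.find_spec (exists_rot_rep v)

lemma idx_rot_one (v : Fin d → V) :
    idx (rot d 1 v) = (idx v + 1) % period (rep v) := by
  have hrot : rot d (idx v + 1) (rep v) = rot d 1 v := by
    rw [add_comm (idx v) 1, ← rot_rot, rot_idx]
  have hmod : rot d ((idx v + 1) % period (rep v)) (rep v) = rot d 1 v := by
    rw [← hrot]
    conv_rhs => rw [← Nat.mod_add_div (idx v + 1) (period (rep v))]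
    rw [← rot_rot, (rot_eq_self_iff (rep v) _).2 ⟨_, rfl⟩]
  have hle : idx (rot d 1 v) ≤ (idx v + 1) % period (rep v) := by
    apply Nat.find_min'
    rwa [rep_rot_one]
  have h1 : rot d (idx (rot d 1 v)) (rep v) = rot d ((idx v + 1) % period (rep v)) (rep v) := by
    rw [hmod]
    have := rot_idx (rot d 1 v)
    rwa [rep_rot_one] at this
  have heq := rot_eq_rot_iff_mod (rep v) h1
  have hltp : (idx v + 1) % period (rep v) < period (rep v) := Nat.mod_lt _ (period_pos _)
  rw [Nat.mod_eq_of_lt (lt_of_le_of_lt hle hltp), Nat.mod_eq_of_lt hltp] at heq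
  exact heq
end
section
variable {V : Type} [DecidableEq V] {c d : ℕ} [NeZero d] [NeZero c]

/-- the product coloring -/
noncomputable def myCol (c : ℕ) [NeZero c] (χ : V → Fin c) (v : Fin d → V) : Fin c :=
  if Cst v then χ (v 0) else ⟨idx v % c, Nat.mod_lt _ (NeZero.pos c)⟩

lemma rot_one_apply (v : Fin d → V) (j : Fin d) : rot d 1 v j = v (j + 1) := by
  simp [rot]

lemma cst_rot_one_iff (v : Fin d → V) : Cst (rot d 1 v) ↔ Cst v := by
  constructor
  · intro h
    have key : ∀ j : Fin d, v (j + 1) = v 1 := by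
      intro j
      have hj := h j
      rw [rot_one_apply, rot_one_apply, zero_add] at hj
      exact hj
    intro j
    have h1 : v j = v 1 := by
      have := key (j - 1)
      rwa [sub_add_cancel] at this
    have h0 : v 0 = v 1 := by
      have := key (0 - 1)
      rwa [sub_add_cancel] at this
    rw [h1, h0]
  · intro h
    exact cst_rot h 1

lemma cst_of_cst_rep {v : Fin d → V} (h : Cst (rep v)) : Cst v := by
  have := cst_rot h (idx v)
  rwa [rot_idx] at this

lemma c_dvd_period (hc : c.Prime) {q : ℕ} (hd : d = c ^ q) {v : Fin d → V} (h : ¬ Cst v) :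
    c ∣ period (rep v) := by
  have hpd : period (rep v) ∣ c ^ q := hd ▸ period_dvd (rep v)
  obtain ⟨i, _, hpe⟩ := (Nat.dvd_prime_pow hc).1 hpd
  have hne : i ≠ 0 := by
    rintro rfl
    exact h (cst_of_cst_rep (cst_of_period_eq_one (by simpa using hpe)))
  rw [hpe]
  exact dvd_pow_self c hne

lemma myCol_rot_one (hc : 1 < c) (χ : V → Fin c) {v : Fin d → V} (h : ¬ Cst v)
    (hdvd : c ∣ period (rep v)) :
    myCol c χ (rot d 1 v) = myCol c χ v + 1 := by
  have h' : ¬ Cst (rot d 1 v) := fun hh => h ((cst_rot_one_iff v).1 hh)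
  rw [myCol, myCol, if_neg h', if_neg h]
  apply Fin.ext
  rw [Fin.val_add]
  have h1 : (1 : Fin c).val = 1 := by
    rw [Fin.val_one']
    exact Nat.mod_eq_of_lt hc
  show idx (rot d 1 v) % c = (idx v % c + (1 : Fin c).val) % c
  rw [h1, idx_rot_one, Nat.mod_mod_of_dvd _ hdvd, Nat.add_mod (idx v) 1, Nat.mod_eq_of_lt hc]
end
section
variable {V : Type} [DecidableEq V] [Fintype V] {c d q : ℕ} [NeZero d] [NeZero c]

lemma myCol_cst (χ : V → Fin c) {v : Fin d → V} (h : Cst v) : myCol c χ v = χ (v 0) := by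
  rw [myCol, if_pos h]

lemma count_key (hc : c.Prime) (hd : d = c ^ q) (χ : V → Fin c) (E : Finset V) (i : Fin c) :
    c * ((Fintype.piFinset fun _ : Fin d => E).filter
        (fun v => myCol c χ v = i)).card + E.card
      = c * (E.filter fun x => χ x = i).card + E.card ^ d := by
  set A := Fintype.piFinset fun _ : Fin d => E with hA
  have memA : ∀ v : Fin d → V, v ∈ A ↔ ∀ j, v j ∈ E := by
    intro v; simp [hA, Fintype.mem_piFinset]
  -- splitting by constancy
  have hsplit : ∀ j : Fin c,
      ((A.filter (fun v => myCol c χ v = j)).filter (fun v => Cst v)).card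
        + ((A.filter (fun v => myCol c χ v = j)).filter (fun v => ¬ Cst v)).card
        = (A.filter (fun v => myCol c χ v = j)).card := fun j =>
    Finset.card_filter_add_card_filter_not _
  -- the constant part, with colors
  have hconst : ((A.filter (fun v => myCol c χ v = i)).filter (fun v => Cst v)).card
      = (E.filter fun x => χ x = i).card := by
    refine Finset.card_bij' (fun v _ => v 0) (fun x _ => fun _ => x) ?_ ?_ ?_ ?_
    · intro v hv
      simp only [Finset.mem_filter] at hv ⊢
      obtain ⟨⟨hvA, hcol⟩, hcst⟩ := hv
      exact ⟨(memA v).1 hvA 0, by rwa [myCol_cst χ hcst] at hcol⟩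
    · intro x hx
      simp only [Finset.mem_filter] at hx ⊢
      refine ⟨⟨(memA _).2 fun j => hx.1, ?_⟩, ?_⟩
      · rw [myCol_cst (v := fun _ : Fin d => x) χ (fun j => rfl)]
        exact hx.2
      · intro j
        rfl
    · intro v hv
      simp only [Finset.mem_filter] at hv
      funext j
      exact (hv.2 j).symm
    · intro x hx
      rfl
  -- the constant part, total
  have hconstT : (A.filter (fun v => Cst v)).card = E.card := by
    refine Finset.card_bij' (fun v _ => v 0) (fun x _ => fun _ => x) ?_ ?_ ?_ ?_
    · intro v hv
      simp only [Finset.mem_filter] at hv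
      exact (memA v).1 hv.1 0
    · intro x hx
      simp only [Finset.mem_filter]
      exact ⟨(memA _).2 fun j => hx, fun j => rfl⟩
    · intro v hv
      simp only [Finset.mem_filter] at hv
      funext j
      exact (hv.2 j).symm
    · intro x hx
      rfl
  -- nonconstant parts are color-independent
  have hstep : ∀ j : Fin c,
      ((A.filter (fun v => myCol c χ v = j)).filter (fun v => ¬ Cst v)).card
        = ((A.filter (fun v => myCol c χ v = j + 1)).filter (fun v => ¬ Cst v)).card := by
    intro j
    refine Finset.card_bij' (fun v _ => rot d 1 v) (fun w _ => rot d (d * 2 - 1) w) ?_ ?_ ?_ ?_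
    · intro v hv
      simp only [Finset.mem_filter] at hv ⊢
      obtain ⟨⟨hvA, hcol⟩, hcst⟩ := hv
      refine ⟨⟨(memA _).2 fun j' => (memA v).1 hvA _, ?_⟩, fun hh => hcst ((cst_rot_one_iff v).1 hh)⟩
      rw [myCol_rot_one hc.one_lt χ hcst (c_dvd_period hc hd hcst), hcol]
    · intro w hw
      simp only [Finset.mem_filter] at hw ⊢
      obtain ⟨⟨hwA, hcol⟩, hcst⟩ := hw
      have hvw : rot d 1 (rot d (d * 2 - 1) w) = w := by
        rw [rot_rot]
        have h1 : 1 + (d * 2 - 1) = d * 2 := by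
          have := NeZero.pos d; omega
        rw [h1]
        exact rot_of_dvd ⟨2, rfl⟩ w
      have hncst : ¬ Cst (rot d (d * 2 - 1) w) := by
        intro hh
        exact hcst (by rw [← hvw]; exact cst_rot hh 1)
      refine ⟨⟨(memA _).2 fun j' => (memA w).1 hwA _, ?_⟩, hncst⟩
      have h2 := myCol_rot_one (d := d) hc.one_lt χ hncst (c_dvd_period hc hd hncst)
      rw [hvw, hcol] at h2
      exact (add_left_injective 1 h2).symm
    · intro v hv
      show rot d (d * 2 - 1) (rot d 1 v) = v
      rw [rot_rot]
      have h1 : d * 2 - 1 + 1 = d * 2 := by have := NeZero.pos d; omega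
      rw [h1]
      exact rot_of_dvd ⟨2, rfl⟩ v
    · intro w hw
      show rot d 1 (rot d (d * 2 - 1) w) = w
      rw [rot_rot]
      have h1 : 1 + (d * 2 - 1) = d * 2 := by have := NeZero.pos d; omega
      rw [h1]
      exact rot_of_dvd ⟨2, rfl⟩ w
  have hall : ∀ j : Fin c,
      ((A.filter (fun v => myCol c χ v = j)).filter (fun v => ¬ Cst v)).card
        = ((A.filter (fun v => myCol c χ v = 0)).filter (fun v => ¬ Cst v)).card := by
    have key : ∀ t : ℕ,
        ((A.filter (fun v => myCol c χ v = ((t : ℕ) : Fin c))).filter (fun v => ¬ Cst v)).card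
          = ((A.filter (fun v => myCol c χ v = 0)).filter (fun v => ¬ Cst v)).card := by
      intro t
      induction t with
      | zero => norm_num
      | succ n ih =>
        have hcast : ((n + 1 : ℕ) : Fin c) = ((n : ℕ) : Fin c) + 1 := by push_cast; ring
        rw [hcast, ← hstep ((n : ℕ) : Fin c)]
        exact ih
    intro j
    have := key j.val
    rwa [Fin.cast_val_eq_self] at this
  -- summing nonconstant parts
  have hsum : ∑ j : Fin c,
      ((A.filter (fun v => myCol c χ v = j)).filter (fun v => ¬ Cst v)).card
        = (A.filter (fun v => ¬ Cst v)).card := by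
    rw [Finset.card_eq_sum_card_fiberwise
      (f := fun v => myCol c χ v) (t := Finset.univ) (fun v _ => Finset.mem_univ _)]
    apply Finset.sum_congr rfl
    intro j _
    rw [Finset.filter_filter, Finset.filter_filter]
    congr 1
    apply Finset.filter_congr
    intro v _
    simp [and_comm]
  have hcmul : c * ((A.filter (fun v => myCol c χ v = i)).filter (fun v => ¬ Cst v)).card
      = (A.filter (fun v => ¬ Cst v)).card := by
    rw [← hsum]
    rw [Finset.sum_congr rfl fun j _ => (hall j).trans (hall i).symm]
    rw [Finset.sum_const, Finset.card_univ, Fintype.card_fin, smul_eq_mul]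
  have hAcard : A.card = E.card ^ d := by
    rw [hA, Fintype.card_piFinset]
    rw [Finset.prod_const, Finset.card_univ, Fintype.card_fin]
  have htot : (A.filter (fun v => Cst v)).card + (A.filter (fun v => ¬ Cst v)).card = A.card :=
    Finset.card_filter_add_card_filter_not _
  have h1 := hsplit i
  rw [← h1, hconst, Nat.mul_add, hcmul]
  have hfin : (A.filter (fun v => ¬ Cst v)).card + E.card = E.card ^ d := by
    rw [← hAcard, ← htot, hconstT]
    ring
  omega
end

section
variable {V : Type} [Fintype V] [DecidableEq V] {c : ℕ} [NeZero c]

lemma discCol_nonneg (H : Finset (Finset V)) (χ : V → Fin c) : 0 ≤ discCol H c χ := by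
  have h1 : ∀ E : Finset V,
      (0:ℝ) ≤ ⨆ _ : E ∈ H, ⨆ i : Fin c,
        |((E.filter fun v => χ v = i).card : ℝ) - (E.card : ℝ) / (c : ℝ)| := by
    intro E
    by_cases hE : E ∈ H
    · rw [ciSup_pos hE]
      exact le_ciSup_of_le (Set.Finite.bddAbove (Set.finite_range _)) ⟨0, NeZero.pos c⟩
        (abs_nonneg _)
    · haveI : IsEmpty (E ∈ H) := ⟨hE⟩
      rw [Real.iSup_of_isEmpty]
  refine le_trans (h1 ∅) ?_
  rw [discCol]
  exact le_ciSup (f := fun E : Finset V => ⨆ _ : E ∈ H, ⨆ i : Fin c,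
    |((E.filter fun v => χ v = i).card : ℝ) - (E.card : ℝ) / (c : ℝ)|)
    (Set.Finite.bddAbove (Set.finite_range _)) ∅

lemma le_discCol (H : Finset (Finset V)) (χ : V → Fin c) {E : Finset V} (hE : E ∈ H)
    (i : Fin c) :
    |((E.filter fun v => χ v = i).card : ℝ) - (E.card : ℝ) / (c : ℝ)| ≤ discCol H c χ := by
  have h2 : |((E.filter fun v => χ v = i).card : ℝ) - (E.card : ℝ) / (c : ℝ)|
      ≤ ⨆ i : Fin c, |((E.filter fun v => χ v = i).card : ℝ) - (E.card : ℝ) / (c : ℝ)| :=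
    le_ciSup (f := fun i : Fin c =>
      |((E.filter fun v => χ v = i).card : ℝ) - (E.card : ℝ) / (c : ℝ)|)
      (Set.Finite.bddAbove (Set.finite_range _)) i
  refine h2.trans ?_
  rw [discCol]
  refine le_trans ?_ (le_ciSup (f := fun E : Finset V => ⨆ _ : E ∈ H, ⨆ i : Fin c,
    |((E.filter fun v => χ v = i).card : ℝ) - (E.card : ℝ) / (c : ℝ)|)
    (Set.Finite.bddAbove (Set.finite_range _)) E)
  rw [ciSup_pos hE]
end

/-- For `c` prime and `d = c^q`, every hypergraph satisfies `disc(Δ^d H, c) ≤ disc(H, c)`. -/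
theorem stmt9 (c q : ℕ) (hc : c.Prime) (hq : 1 ≤ q)
    (V : Type) [Fintype V] [DecidableEq V] (H : Finset (Finset V)) :
    disc (symProd H (c ^ q)) c ≤ disc H c := by
  haveI : NeZero c := ⟨hc.pos.ne'⟩
  haveI : NeZero (c ^ q) := ⟨pow_ne_zero q hc.pos.ne'⟩
  apply le_ciInf
  intro χ
  have hc0 : (c : ℝ) ≠ 0 := Nat.cast_ne_zero.2 hc.pos.ne'
  have key : discCol (symProd H (c ^ q)) c (myCol c χ) ≤ discCol H c χ := by
    refine Real.iSup_le (fun E' => ?_) (discCol_nonneg H χ)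
    refine Real.iSup_le (fun hE' => ?_) (discCol_nonneg H χ)
    obtain ⟨E, hE, rfl⟩ := Finset.mem_image.1 hE'
    refine Real.iSup_le (fun i => ?_) (discCol_nonneg H χ)
    have hcard : (Fintype.piFinset fun _ : Fin (c ^ q) => E).card = E.card ^ (c ^ q) := by
      rw [Fintype.card_piFinset, Finset.prod_const, Finset.card_univ, Fintype.card_fin]
    have hck := count_key (q := q) hc rfl χ E i
    have hck' : (c : ℝ) * (((Fintype.piFinset fun _ : Fin (c ^ q) => E).filter
          (fun v => myCol c χ v = i)).card : ℝ) + (E.card : ℝ)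
        = (c : ℝ) * ((E.filter fun x => χ x = i).card : ℝ) + (E.card : ℝ) ^ (c ^ q) := by
      exact_mod_cast congrArg (Nat.cast : ℕ → ℝ) hck
    have heq : (((Fintype.piFinset fun _ : Fin (c ^ q) => E).filter
          (fun v => myCol c χ v = i)).card : ℝ)
          - ((Fintype.piFinset fun _ : Fin (c ^ q) => E).card : ℝ) / (c : ℝ)
        = ((E.filter fun x => χ x = i).card : ℝ) - (E.card : ℝ) / (c : ℝ) := by
      rw [hcard]
      push_cast
      field_simp
      linarith
    rw [heq]
    exact le_discCol H χ hE i
  refine le_trans (ciInf_le ?_ (myCol c χ)) key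
  exact ⟨0, by rintro x ⟨χ', rfl⟩; exact discCol_nonneg _ _⟩
end

section
/- Let d ∈ ℕ with d ≥ 1 and let T ⊆ ℕ be finite. The collection of all simplices S^σ_J(T), where l ranges over [d], J ranges over P_l(d), and σ ranges over the permutations of [l], covers T^d and any two distinct index triples (l, J, σ) yield disjoint simplices; i.e., every point of T^d lies in exactly one simplex S^σ_J(T). -/
/-- `J` is a partition of `[d]` (realized as `Fin d`) into `l` nonempty subsets,
i.e. `J ∈ P_l(d)`. -/
def IsPartitionInto (d l : ℕ) (J : Finset (Finset (Fin d))) : Prop :=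
  J.card = l ∧ (∀ A ∈ J, A.Nonempty) ∧ ∀ j : Fin d, ∃! A, A ∈ J ∧ j ∈ A

/-- The (0-based) rank of a part `A` of `J` when the parts of `J` are ordered
by their minimal elements. -/
def partRank {d : ℕ} (J : Finset (Finset (Fin d))) (A : Finset (Fin d)) : ℕ :=
  (J.filter fun B => B.min < A.min).card

/-- The `l`-dimensional simplex `S^σ_J(T) ⊆ T^d`: all points `Σ_i α_(σ(i)) f_i(J)`
with `α : Fin l → T` strictly increasing; equivalently, the point whose `j`-th
coordinate is `α (σ i)` whenever `j` lies in the part of `J` of rank `i`. -/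
def simplexSet (d l : ℕ) (J : Finset (Finset (Fin d))) (σ : Equiv.Perm (Fin l))
    (T : Finset ℕ) : Set (Fin d → ℕ) :=
  { x | ∃ α : Fin l → ℕ, StrictMono α ∧ (∀ i, α i ∈ T) ∧
      ∀ (j : Fin d), ∀ A ∈ J, j ∈ A → ∀ i : Fin l, partRank J A = (i : ℕ) → x j = α (σ i) }

section Aux
variable {d l : ℕ} {J : Finset (Finset (Fin d))}

lemma part_eq_of_mem (hJ : IsPartitionInto d l J) {A B : Finset (Fin d)} (hA : A ∈ J)
    (hB : B ∈ J) {j : Fin d} (hjA : j ∈ A) (hjB : j ∈ B) : A = B := by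
  obtain ⟨C, -, hu⟩ := hJ.2.2 j
  exact (hu A ⟨hA, hjA⟩).trans (hu B ⟨hB, hjB⟩).symm

lemma min_inj (hJ : IsPartitionInto d l J) {A B : Finset (Fin d)} (hA : A ∈ J) (hB : B ∈ J)
    (h : A.min = B.min) : A = B := by
  have hAne := hJ.2.1 A hA
  have hm : (A.min' hAne : WithTop (Fin d)) = A.min := Finset.coe_min' hAne
  have h1 : A.min' hAne ∈ A := A.min'_mem hAne
  have h2 : A.min' hAne ∈ B := Finset.mem_of_min (by rw [← h, ← hm])
  exact part_eq_of_mem hJ hA hB h1 h2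

lemma partRank_lt (hJ : IsPartitionInto d l J) {A : Finset (Fin d)} (hA : A ∈ J) :
    partRank J A < l := by
  have hss : J.filter (fun B => B.min < A.min) ⊂ J := by
    refine Finset.ssubset_iff_of_subset (Finset.filter_subset _ _) |>.mpr ⟨A, hA, ?_⟩
    simp
  simpa [partRank, hJ.1] using Finset.card_lt_card hss

lemma partRank_inj (hJ : IsPartitionInto d l J) {A B : Finset (Fin d)} (hA : A ∈ J)
    (hB : B ∈ J) (h : partRank J A = partRank J B) : A = B := by
  rcases lt_trichotomy A.min B.min with hlt | heq | hlt
  · exfalso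
    have hss : J.filter (fun C => C.min < A.min) ⊂ J.filter (fun C => C.min < B.min) := by
      refine ⟨?_, ?_⟩
      · exact Finset.monotone_filter_right J (fun C _ hC => hC.trans hlt)
      · intro hsub
        have := hsub (Finset.mem_filter.mpr ⟨hA, hlt⟩)
        simp at this
    exact absurd h (Nat.ne_of_lt (Finset.card_lt_card hss))
  · exact min_inj hJ hA hB heq
  · exfalso
    have hss : J.filter (fun C => C.min < B.min) ⊂ J.filter (fun C => C.min < A.min) := by
      refine ⟨?_, ?_⟩
      · exact Finset.monotone_filter_right J (fun C _ hC => hC.trans hlt)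
      · intro hsub
        have := hsub (Finset.mem_filter.mpr ⟨hB, hlt⟩)
        simp at this
    exact absurd h.symm (Nat.ne_of_lt (Finset.card_lt_card hss))

lemma partRank_surj (hJ : IsPartitionInto d l J) (i : Fin l) :
    ∃ A ∈ J, partRank J A = (i : ℕ) := by
  have hcard : Fintype.card ↥J = Fintype.card (Fin l) := by
    simp [Fintype.card_coe, hJ.1]
  have hinj : Function.Injective (fun A : ↥J => (⟨partRank J A.1, partRank_lt hJ A.2⟩ : Fin l)) := by
    intro A B hAB
    exact Subtype.ext (partRank_inj hJ A.2 B.2 (by simpa using congrArg Fin.val hAB))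
  have hbij := (Fintype.bijective_iff_injective_and_card _).mpr ⟨hinj, hcard⟩
  obtain ⟨A, hA⟩ := hbij.2 i
  exact ⟨A.1, A.2, by simpa using congrArg Fin.val hA⟩

end Aux

section Fib
variable {d : ℕ}

def fiber (x : Fin d → ℕ) (j : Fin d) : Finset (Fin d) := Finset.univ.filter fun k => x k = x j

def vals (x : Fin d → ℕ) : Finset ℕ := Finset.image x Finset.univ

def fibers (x : Fin d → ℕ) : Finset (Finset (Fin d)) := Finset.image (fiber x) Finset.univ

variable {x : Fin d → ℕ}

lemma mem_fiber {j k : Fin d} : k ∈ fiber x j ↔ x k = x j := by simp [fiber]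

lemma fiber_eq_of_eq {j k : Fin d} (h : x k = x j) : fiber x k = fiber x j := by
  ext m; simp [mem_fiber, h]

lemma fibers_card : (fibers x).card = (vals x).card := by
  have h1 : fibers x = (vals x).image (fun v => Finset.univ.filter fun k => x k = v) := by
    unfold fibers vals fiber
    rw [Finset.image_image]
    rfl
  rw [h1]
  refine Finset.card_image_of_injOn ?_
  intro v hv v' hv' h
  obtain ⟨j, -, rfl⟩ := Finset.mem_image.mp hv
  simp only at h
  have hj : j ∈ Finset.univ.filter fun k => x k = x j := by simp
  rw [h] at hj
  exact (Finset.mem_filter.mp hj).2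

lemma fibers_partition (x : Fin d → ℕ) : IsPartitionInto d (vals x).card (fibers x) := by
  refine ⟨fibers_card, ?_, ?_⟩
  · intro A hA
    obtain ⟨j, -, rfl⟩ := Finset.mem_image.mp hA
    exact ⟨j, mem_fiber.mpr rfl⟩
  · intro j
    refine ⟨fiber x j, ⟨Finset.mem_image.mpr ⟨j, Finset.mem_univ j, rfl⟩, mem_fiber.mpr rfl⟩, ?_⟩
    rintro A ⟨hA, hjA⟩
    obtain ⟨k, -, rfl⟩ := Finset.mem_image.mp hA
    exact fiber_eq_of_eq (show x j = x k from mem_fiber.mp hjA).symm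

noncomputable def partVal (x : Fin d → ℕ) (A : Finset (Fin d)) : ℕ :=
  if h : A.Nonempty then x (A.min' h) else 0

lemma partVal_eq {A : Finset (Fin d)} (hA : A ∈ fibers x) {j : Fin d} (hj : j ∈ A) :
    partVal x A = x j := by
  obtain ⟨k, -, rfl⟩ := Finset.mem_image.mp hA
  have hne : (fiber x k).Nonempty := ⟨k, mem_fiber.mpr rfl⟩
  rw [partVal, dif_pos hne, mem_fiber.mp ((fiber x k).min'_mem hne), mem_fiber.mp hj]

end Fib

section Canon
variable {d : ℕ} (x : Fin d → ℕ)

noncomputable def rankEquiv {l : ℕ} {J : Finset (Finset (Fin d))}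
    (hJ : IsPartitionInto d l J) : ↥J ≃ Fin l :=
  Equiv.ofBijective (fun A => ⟨partRank J A.1, partRank_lt hJ A.2⟩)
    ((Fintype.bijective_iff_injective_and_card _).mpr
      ⟨fun A B hAB => Subtype.ext (partRank_inj hJ A.2 B.2 (by simpa using congrArg Fin.val hAB)),
       by simp [Fintype.card_coe, hJ.1]⟩)

lemma rankEquiv_apply {l : ℕ} {J : Finset (Finset (Fin d))} (hJ : IsPartitionInto d l J)
    (A : ↥J) : (rankEquiv hJ A : ℕ) = partRank J A.1 := rfl

noncomputable def valEquiv : ↥(fibers x) ≃ ↥(vals x) :=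
  Equiv.ofBijective
    (fun A => ⟨partVal x A.1, by
      obtain ⟨j, hj⟩ := (fibers_partition x).2.1 A.1 A.2
      rw [partVal_eq A.2 hj]
      exact Finset.mem_image.mpr ⟨j, Finset.mem_univ j, rfl⟩⟩)
    ((Fintype.bijective_iff_injective_and_card _).mpr ⟨by
      intro A B hAB
      have h : partVal x A.1 = partVal x B.1 := congrArg Subtype.val hAB
      obtain ⟨j, hj⟩ := (fibers_partition x).2.1 A.1 A.2
      obtain ⟨k, hk⟩ := (fibers_partition x).2.1 B.1 B.2
      rw [partVal_eq A.2 hj, partVal_eq B.2 hk] at h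
      obtain ⟨j', -, hA'⟩ := Finset.mem_image.mp A.2
      obtain ⟨k', -, hB'⟩ := Finset.mem_image.mp B.2
      refine Subtype.ext ?_
      rw [← hA', ← hB']
      rw [← hA'] at hj; rw [← hB'] at hk
      calc fiber x j' = fiber x j := (fiber_eq_of_eq (mem_fiber.mp hj)).symm
        _ = fiber x k := fiber_eq_of_eq h
        _ = fiber x k' := fiber_eq_of_eq (mem_fiber.mp hk),
      by simp [Fintype.card_coe, fibers_card]⟩)

noncomputable def sigma0 : Equiv.Perm (Fin (vals x).card) :=
  (rankEquiv (fibers_partition x)).symm.trans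
    ((valEquiv x).trans ((vals x).orderIsoOfFin rfl).toEquiv.symm)

noncomputable def alpha0 : Fin (vals x).card → ℕ := fun i => (vals x).orderEmbOfFin rfl i

lemma alpha0_strictMono : StrictMono (alpha0 x) := ((vals x).orderEmbOfFin rfl).strictMono

lemma alpha0_mem (i : Fin (vals x).card) : alpha0 x i ∈ vals x :=
  Finset.orderEmbOfFin_mem _ rfl i

variable {x}

lemma sigma0_spec {j : Fin d} {A : Finset (Fin d)} (hA : A ∈ fibers x) (hj : j ∈ A)
    {i : Fin (vals x).card} (hi : partRank (fibers x) A = (i : ℕ)) :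
    x j = alpha0 x (sigma0 x i) := by
  have hAi : rankEquiv (fibers_partition x) ⟨A, hA⟩ = i := Fin.ext hi
  have h1 : (rankEquiv (fibers_partition x)).symm i = ⟨A, hA⟩ := by
    rw [← hAi, Equiv.symm_apply_apply]
  rw [sigma0]
  simp only [Equiv.trans_apply, h1]
  rw [alpha0]
  rw [← Finset.coe_orderIsoOfFin_apply]
  erw [OrderIso.apply_symm_apply]
  exact (partVal_eq hA hj).symm

end Canon

/-- The simplices `S^σ_J(T)`, for `l ∈ [d]`, `J ∈ P_l(d)` and `σ` a permutation of
`[l]`, partition `T^d`: every point of `T^d` lies in the simplex of exactly one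
index triple `(l, J, σ)`. -/
theorem stmt12 (d : ℕ) (hd : 1 ≤ d) (T : Finset ℕ) (x : Fin d → ℕ) (hx : ∀ j, x j ∈ T) :
    ∃! p : (l : ℕ) × Finset (Finset (Fin d)) × Equiv.Perm (Fin l),
      (p.1 ∈ Finset.Icc 1 d ∧ IsPartitionInto d p.1 p.2.1) ∧
      x ∈ simplexSet d p.1 p.2.1 p.2.2 T := by

  have hvT : ∀ v ∈ vals x, v ∈ T := by
    intro v hv; obtain ⟨j, -, rfl⟩ := Finset.mem_image.mp hv; exact hx j
  refine ⟨⟨(vals x).card, fibers x, sigma0 x⟩, ⟨⟨?_, fibers_partition x⟩, ?_⟩, ?_⟩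
  · refine Finset.mem_Icc.mpr ⟨?_, ?_⟩
    · exact (Finset.card_pos (s := vals x)).mpr ⟨x ⟨0, hd⟩, Finset.mem_image.mpr ⟨⟨0, hd⟩, Finset.mem_univ _, rfl⟩⟩
    · calc (vals x).card ≤ (Finset.univ : Finset (Fin d)).card := Finset.card_image_le
        _ = d := by simp
  · exact ⟨alpha0 x, alpha0_strictMono x, fun i => hvT _ (alpha0_mem x i),
      fun j A hA hj i hi => sigma0_spec hA hj hi⟩
  · rintro ⟨l, J, σ⟩ ⟨⟨hl, hJ⟩, α, hmono, hT, hα⟩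
    dsimp only at hl hJ hT hα
    have hval : ∀ A, (hA : A ∈ J) → ∀ j ∈ A,
        x j = α (σ ⟨partRank J A, partRank_lt hJ hA⟩) := by
      intro A hA j hj
      exact hα j A hA hj ⟨partRank J A, partRank_lt hJ hA⟩ rfl
    have hvalinj : ∀ A, A ∈ J → ∀ B, B ∈ J → ∀ j ∈ A, ∀ k ∈ B,
        x j = x k → A = B := by
      intro A hA B hB j hj k hk hxx
      have h1 := (hval A hA j hj).symm.trans (hxx.trans (hval B hB k hk))
      have h3 := σ.injective (hmono.injective h1)
      exact partRank_inj hJ hA hB (congrArg Fin.val h3)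
    have hfib : ∀ A, A ∈ J → ∀ j ∈ A, A = fiber x j := by
      intro A hA j hj
      ext k
      constructor
      · intro hk
        exact mem_fiber.mpr ((hval A hA k hk).trans (hval A hA j hj).symm)
      · intro hk
        obtain ⟨B, ⟨hB, hkB⟩, -⟩ := hJ.2.2 k
        have hAB : A = B := hvalinj A hA B hB j hj k hkB (mem_fiber.mp hk).symm
        rw [hAB]; exact hkB
    have hJeq : J = fibers x := by
      ext A
      constructor
      · intro hA
        obtain ⟨j, hj⟩ := hJ.2.1 A hA
        exact Finset.mem_image.mpr ⟨j, Finset.mem_univ j, (hfib A hA j hj).symm⟩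
      · intro hA
        obtain ⟨j, -, rfl⟩ := Finset.mem_image.mp hA
        obtain ⟨B, ⟨hB, hjB⟩, -⟩ := hJ.2.2 j
        have hBf : B = fiber x j := hfib B hB j hjB
        rw [← hBf]; exact hB
    have hleq : l = (vals x).card := by
      rw [← hJ.1, hJeq, fibers_card]
    subst hleq
    have hrange : ∀ i, α i ∈ vals x := by
      intro i
      obtain ⟨A, hA, hr⟩ := partRank_surj hJ (σ.symm i)
      obtain ⟨j, hj⟩ := hJ.2.1 A hA
      have h1 := hval A hA j hj
      have hidx : (⟨partRank J A, partRank_lt hJ hA⟩ : Fin _) = σ.symm i := Fin.ext hr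
      rw [hidx, Equiv.apply_symm_apply] at h1
      rw [← h1]
      exact Finset.mem_image.mpr ⟨j, Finset.mem_univ j, rfl⟩
    have hαeq : α = alpha0 x := Finset.orderEmbOfFin_unique (s := vals x) rfl hrange hmono
    have hσeq : σ = sigma0 x := by
      refine Equiv.ext fun i => ?_
      obtain ⟨A, hA, hr⟩ := partRank_surj hJ i
      obtain ⟨j, hj⟩ := hJ.2.1 A hA
      have h1 := hval A hA j hj
      have hidx : (⟨partRank J A, partRank_lt hJ hA⟩ : Fin _) = i := Fin.ext hr
      rw [hidx] at h1
      have h2 : x j = alpha0 x (sigma0 x i) :=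
        sigma0_spec (hJeq ▸ hA) hj (by rw [← hJeq]; exact hr)
      rw [hαeq] at h1
      exact (alpha0_strictMono x).injective (h1.symm.trans h2)
    refine Sigma.ext rfl (heq_of_eq ?_)
    exact Prod.ext hJeq hσeq
end

section
/- Let d ∈ ℕ, l ∈ [d], and let T ⊆ ℕ be a finite set with |T| ≥ l. If I, J ∈ P_l(d) and σ, τ are permutations of [l] with (I, σ) ≠ (J, τ), then S^σ_I(T) ≠ S^τ_J(T). Consequently, the number of distinct l-dimensional simplices in T^d equals l!·S(d,l), where S(d,l) is the Stirling number of the second kind. -/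
namespace Aux13


open Finset

variable {d l : ℕ} {J : Finset (Finset (Fin d))}

noncomputable def partOf (J : Finset (Finset (Fin d))) (j : Fin d) : Finset (Fin d) :=
  if h : ∃ A, A ∈ J ∧ j ∈ A then h.choose else ∅

lemma partOf_spec (hJ : IsPartitionInto d l J) (j : Fin d) :
    partOf J j ∈ J ∧ j ∈ partOf J j := by
  have h := (hJ.2.2 j).exists
  rw [partOf, dif_pos h]
  exact h.choose_spec

lemma partOf_unique (hJ : IsPartitionInto d l J) {A : Finset (Fin d)} {j : Fin d}
    (hA : A ∈ J) (hj : j ∈ A) : A = partOf J j :=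
  (hJ.2.2 j).unique ⟨hA, hj⟩ ⟨(partOf_spec hJ j).1, (partOf_spec hJ j).2⟩

lemma min_inj (hJ : IsPartitionInto d l J) {A B : Finset (Fin d)} (hA : A ∈ J) (hB : B ∈ J)
    (h : A.min = B.min) : A = B := by
  obtain ⟨a, ha⟩ := hJ.2.1 A hA
  have h1 : A.min = ↑(A.min' ⟨a, ha⟩) := (Finset.coe_min' _).symm
  have hmB : A.min' ⟨a, ha⟩ ∈ B := Finset.mem_of_min (h.symm.trans h1)
  exact (hJ.2.2 (A.min' ⟨a, ha⟩)).unique ⟨hA, Finset.min'_mem _ _⟩ ⟨hB, hmB⟩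

lemma partRank_lt (hJ : IsPartitionInto d l J) {A : Finset (Fin d)} (hA : A ∈ J) :
    partRank J A < l := by
  rw [← hJ.1]
  refine Finset.card_lt_card ⟨Finset.filter_subset _ _, fun hsub => ?_⟩
  have := Finset.mem_filter.mp (hsub hA)
  exact absurd this.2 (lt_irrefl _)

lemma partRank_strictMono (hJ : IsPartitionInto d l J) {A B : Finset (Fin d)}
    (hA : A ∈ J) (hB : B ∈ J) (h : A.min < B.min) : partRank J A < partRank J B := by
  apply Finset.card_lt_card
  rw [Finset.ssubset_def]
  constructor
  · intro C hC
    rw [Finset.mem_filter] at hC ⊢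
    exact ⟨hC.1, hC.2.trans h⟩
  · intro hsub
    have := Finset.mem_filter.mp (hsub (Finset.mem_filter.mpr ⟨hA, h⟩))
    exact absurd this.2 (lt_irrefl _)

lemma partRank_inj (hJ : IsPartitionInto d l J) {A B : Finset (Fin d)}
    (hA : A ∈ J) (hB : B ∈ J) (h : partRank J A = partRank J B) : A = B := by
  rcases lt_trichotomy A.min B.min with hlt | heq | hlt
  · exact absurd h (partRank_strictMono hJ hA hB hlt).ne
  · exact min_inj hJ hA hB heq
  · exact absurd h.symm (partRank_strictMono hJ hB hA hlt).ne

lemma partRank_surj (hJ : IsPartitionInto d l J) {i : ℕ} (hi : i < l) :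
    ∃ A ∈ J, partRank J A = i := by
  have hinj : Set.InjOn (partRank J) J := fun A hA B hB => partRank_inj hJ hA hB
  have himg : J.image (partRank J) ⊆ Finset.range l := by
    intro r hr
    obtain ⟨A, hA, rfl⟩ := Finset.mem_image.mp hr
    exact Finset.mem_range.mpr (partRank_lt hJ hA)
  have hcard : (J.image (partRank J)).card = l := by
    rw [Finset.card_image_of_injOn hinj, hJ.1]
  have : J.image (partRank J) = Finset.range l :=
    Finset.eq_of_subset_of_card_le himg (by rw [hcard, Finset.card_range])
  have : i ∈ J.image (partRank J) := this ▸ Finset.mem_range.mpr hi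
  obtain ⟨A, hA, hr⟩ := Finset.mem_image.mp this
  exact ⟨A, hA, hr⟩

noncomputable def cl (hJ : IsPartitionInto d l J) (j : Fin d) : Fin l :=
  ⟨partRank J (partOf J j), partRank_lt hJ (partOf_spec hJ j).1⟩

lemma cl_eq_iff (hJ : IsPartitionInto d l J) {j j' : Fin d} :
    cl hJ j = cl hJ j' ↔ partOf J j = partOf J j' := by
  constructor
  · intro h
    exact partRank_inj hJ (partOf_spec hJ j).1 (partOf_spec hJ j').1 (congrArg Fin.val h)
  · intro h
    simp only [cl, h]

lemma mem_partOf_iff (hJ : IsPartitionInto d l J) {j j' : Fin d} :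
    j' ∈ partOf J j ↔ partOf J j' = partOf J j := by
  constructor
  · intro h
    exact (partOf_unique hJ (partOf_spec hJ j).1 h).symm
  · intro h
    exact h ▸ (partOf_spec hJ j').2

lemma cl_surj (hJ : IsPartitionInto d l J) : Function.Surjective (cl hJ) := by
  intro i
  obtain ⟨A, hA, hr⟩ := partRank_surj hJ i.2
  obtain ⟨a, ha⟩ := hJ.2.1 A hA
  refine ⟨a, ?_⟩
  have : A = partOf J a := partOf_unique hJ hA ha
  simp only [cl, ← this, hr]

lemma classes_eq {I J : Finset (Finset (Fin d))} (hI : IsPartitionInto d l I)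
    (hJ : IsPartitionInto d l J)
    (h : ∀ j j' : Fin d, cl hI j = cl hI j' ↔ cl hJ j = cl hJ j') : I = J := by
  have key : ∀ a : Fin d, partOf I a = partOf J a := by
    intro a
    ext j
    rw [mem_partOf_iff hI, mem_partOf_iff hJ, ← cl_eq_iff hI, ← cl_eq_iff hJ]
    exact h j a
  ext A
  constructor
  · intro hA
    obtain ⟨a, ha⟩ := hI.2.1 A hA
    rw [partOf_unique hI hA ha, key]
    exact (partOf_spec hJ a).1
  · intro hA
    obtain ⟨a, ha⟩ := hJ.2.1 A hA
    rw [partOf_unique hJ hA ha, ← key]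
    exact (partOf_spec hI a).1


lemma mem_simplexSet (hJ : IsPartitionInto d l J) {σ : Equiv.Perm (Fin l)} {T : Finset ℕ}
    {x : Fin d → ℕ} :
    x ∈ simplexSet d l J σ T ↔ ∃ α : Fin l → ℕ, StrictMono α ∧ (∀ i, α i ∈ T) ∧
      ∀ j : Fin d, x j = α (σ (cl hJ j)) := by
  constructor
  · rintro ⟨α, hα, hαT, hprop⟩
    refine ⟨α, hα, hαT, fun j => ?_⟩
    exact hprop j (partOf J j) (partOf_spec hJ j).1 (partOf_spec hJ j).2 (cl hJ j) rfl
  · rintro ⟨α, hα, hαT, hprop⟩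
    refine ⟨α, hα, hαT, fun j A hA hjA i hi => ?_⟩
    have hAp : A = partOf J j := partOf_unique hJ hA hjA
    have : cl hJ j = i := Fin.ext (by rw [← hi, hAp]; rfl)
    rw [hprop j, this]


lemma simplex_inj {I J : Finset (Finset (Fin d))} {σ τ : Equiv.Perm (Fin l)} {T : Finset ℕ}
    (hI : IsPartitionInto d l I) (hJ : IsPartitionInto d l J) (hT : l ≤ T.card)
    (heq : simplexSet d l I σ T = simplexSet d l J τ T) : I = J ∧ σ = τ := by
  set α₀ : Fin l → ℕ := fun i => ((T.orderIsoOfFin rfl) ⟨i.1, lt_of_lt_of_le i.2 hT⟩ : ℕ)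
    with hα₀def
  have hα₀ : StrictMono α₀ := by
    intro i i' h
    have h1 : (⟨i.1, lt_of_lt_of_le i.2 hT⟩ : Fin T.card) < ⟨i'.1, lt_of_lt_of_le i'.2 hT⟩ := h
    exact Subtype.coe_lt_coe.mpr ((T.orderIsoOfFin rfl).strictMono h1)
  have hα₀T : ∀ i, α₀ i ∈ T := fun i => ((T.orderIsoOfFin rfl) _).2
  have hx₀ : (fun j => α₀ (σ (cl hI j))) ∈ simplexSet d l I σ T :=
    (mem_simplexSet hI).mpr ⟨α₀, hα₀, hα₀T, fun j => rfl⟩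
  rw [heq, mem_simplexSet hJ] at hx₀
  obtain ⟨β, hβ, hβT, hprop⟩ := hx₀
  have hprop : ∀ j, α₀ (σ (cl hI j)) = β (τ (cl hJ j)) := hprop
  have hclasses : ∀ j j' : Fin d, cl hI j = cl hI j' ↔ cl hJ j = cl hJ j' := by
    intro j j'
    constructor
    · intro h
      have : β (τ (cl hJ j)) = β (τ (cl hJ j')) := by rw [← hprop, ← hprop, h]
      exact τ.injective (hβ.injective this)
    · intro h
      have : α₀ (σ (cl hI j)) = α₀ (σ (cl hI j')) := by rw [hprop, hprop, h]
      exact σ.injective (hα₀.injective this)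
  have hIJ : I = J := classes_eq hI hJ hclasses
  subst hIJ
  have hcl : ∀ j, cl hI j = cl hJ j := fun j => Fin.ext rfl
  refine ⟨rfl, ?_⟩
  have hfull : ∀ i : Fin l, α₀ (σ i) = β (τ i) := by
    intro i
    obtain ⟨j, hj⟩ := cl_surj hJ i
    rw [← hj, ← hcl j, hprop j, hcl j]
  set π : Equiv.Perm (Fin l) := τ.symm.trans σ with hπdef
  have hπβ : ∀ i, α₀ (π i) = β i := by
    intro i
    have := hfull (τ.symm i)
    simpa [hπdef] using this
  have hπmono : StrictMono (⇑π) := by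
    intro i i' h
    have : β i < β i' := hβ h
    rw [← hπβ, ← hπβ] at this
    exact hα₀.lt_iff_lt.mp this
  have hπid : ⇑π = id := by
    have key := @StrictMono.range_inj (Fin l) (Fin l) _ _ Finite.to_wellFoundedLT
      (⇑π) id hπmono strictMono_id
    exact key.mp (by rw [π.surjective.range_eq, Set.range_id])
  exact Equiv.ext fun i => by simpa [hπdef] using congrFun hπid (τ i)



def Psi (d k : ℕ) :
    (Fin (k+1) × {g : Fin d → Fin (k+1) // Function.Surjective g}) ⊕
      (Fin (k+1) × {h : Fin d → Fin k // Function.Surjective h}) →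
    {f : Fin (d+1) → Fin (k+1) // Function.Surjective f}
  | Sum.inl (v, ⟨g, hg⟩) => ⟨Fin.snoc g v, by
      intro w
      obtain ⟨j, hj⟩ := hg w
      exact ⟨j.castSucc, by simp [hj]⟩⟩
  | Sum.inr (v, ⟨h, _⟩) => ⟨Fin.snoc (fun j => v.succAbove (h j)) v, by
      rename_i hh
      intro w
      by_cases hw : w = v
      · exact ⟨Fin.last d, by simp [hw]⟩
      · obtain ⟨i, hi⟩ := Fin.exists_succAbove_eq hw
        obtain ⟨j, hj⟩ := hh i
        exact ⟨j.castSucc, by simp [hj, hi]⟩⟩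

lemma Psi_inj (d k : ℕ) : Function.Injective (Psi d k) := by
  rintro (⟨v, g, hg⟩ | ⟨v, h, hh⟩) (⟨v', g', hg'⟩ | ⟨v', h', hh'⟩) heq <;>
    simp only [Psi, Subtype.mk.injEq] at heq <;> replace heq := congrArg Subtype.val heq
  · have hv : v = v' := by simpa using congrFun heq (Fin.last d)
    have hgg : g = g' := funext fun j => by simpa using congrFun heq j.castSucc
    subst hv; subst hgg; rfl
  · have hv : v = v' := by simpa using congrFun heq (Fin.last d)
    subst hv
    obtain ⟨j, hj⟩ := hg v
    have := congrFun heq j.castSucc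
    simp only [Fin.snoc_castSucc, hj] at this
    exact absurd this.symm (Fin.succAbove_ne v (h' j))
  · have hv : v = v' := by simpa using congrFun heq (Fin.last d)
    subst hv
    obtain ⟨j, hj⟩ := hg' v
    have := congrFun heq j.castSucc
    simp only [Fin.snoc_castSucc, hj] at this
    exact absurd this (Fin.succAbove_ne v (h j))
  · have hv : v = v' := by simpa using congrFun heq (Fin.last d)
    subst hv
    have hhh : h = h' := funext fun j => by
      have := congrFun heq j.castSucc
      simp only [Fin.snoc_castSucc] at this
      exact Fin.succAbove_right_injective this
    subst hhh; rfl

lemma Psi_surj (d k : ℕ) : Function.Surjective (Psi d k) := by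
  rintro ⟨f, hf⟩
  by_cases hg : Function.Surjective (fun j : Fin d => f j.castSucc)
  · exact ⟨Sum.inl (f (Fin.last d), ⟨_, hg⟩), Subtype.ext (Fin.snoc_init_self f)⟩
  · obtain ⟨w, hw⟩ : ∃ w, ∀ j : Fin d, f j.castSucc ≠ w := by
      simpa [Function.Surjective] using hg
    have hlast : f (Fin.last d) = w := by
      obtain ⟨i, hi⟩ := hf w
      rcases Fin.eq_castSucc_or_eq_last i with ⟨j, rfl⟩ | rfl
      · exact absurd hi (hw j)
      · exact hi
    choose h hh using fun j => Fin.exists_succAbove_eq (hw j)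
    have hhsurj : Function.Surjective h := by
      intro i
      obtain ⟨m, hm⟩ := hf (w.succAbove i)
      rcases Fin.eq_castSucc_or_eq_last m with ⟨j, rfl⟩ | rfl
      · exact ⟨j, Fin.succAbove_right_injective (p := w) (by rw [hh j, hm])⟩
      · rw [hlast] at hm
        exact absurd hm.symm (Fin.succAbove_ne w i)
    refine ⟨Sum.inr (w, ⟨h, hhsurj⟩), Subtype.ext ?_⟩
    funext m
    rcases Fin.eq_castSucc_or_eq_last m with ⟨j, rfl⟩ | rfl
    · simp [Psi, Fin.snoc_castSucc, hh j]
    · simp [Psi, Fin.snoc_last, hlast]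

lemma surjCard : ∀ d k : ℕ,
    Nat.card {f : Fin d → Fin k // Function.Surjective f} = k.factorial * stirling2 d k := by
  intro d
  induction d with
  | zero =>
    intro k
    cases k with
    | zero =>
      haveI : Unique {f : Fin 0 → Fin 0 // Function.Surjective f} :=
        ⟨⟨⟨fun x => x.elim0, fun b => b.elim0⟩⟩, fun a => Subtype.ext (funext fun x => x.elim0)⟩
      rw [Nat.card_unique]
      simp [stirling2]
    | succ k =>
      haveI : IsEmpty {f : Fin 0 → Fin (k+1) // Function.Surjective f} :=
        ⟨fun ⟨_, hf⟩ => (hf 0).choose.elim0⟩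
      rw [Nat.card_of_isEmpty]
      simp [stirling2]
  | succ d ih =>
    intro k
    cases k with
    | zero =>
      haveI : IsEmpty {f : Fin (d+1) → Fin 0 // Function.Surjective f} :=
        ⟨fun ⟨f, _⟩ => (f 0).elim0⟩
      rw [Nat.card_of_isEmpty]
      simp [stirling2]
    | succ k =>
      have hbij := Nat.card_eq_of_bijective (Psi d k) ⟨Psi_inj d k, Psi_surj d k⟩
      rw [Nat.card_sum, Nat.card_prod, Nat.card_prod] at hbij
      rw [← hbij, ih (k+1), ih k]
      simp only [Nat.card_eq_fintype_card, Fintype.card_fin]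
      show (k+1) * ((k+1).factorial * stirling2 d (k+1)) + (k+1) * (k.factorial * stirling2 d k)
        = (k+1).factorial * stirling2 (d+1) (k+1)
      rw [show stirling2 (d+1) (k+1) = (k + 1) * stirling2 d (k + 1) + stirling2 d k from rfl,
        Nat.factorial_succ]
      ring


noncomputable def Theta (d l : ℕ) :
    {p : Finset (Finset (Fin d)) × Equiv.Perm (Fin l) // IsPartitionInto d l p.1} →
    {f : Fin d → Fin l // Function.Surjective f} :=
  fun p => ⟨p.1.2 ∘ cl p.2, p.1.2.surjective.comp (cl_surj p.2)⟩

lemma Theta_inj (d l : ℕ) : Function.Injective (Theta d l) := by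
  rintro ⟨⟨J, σ⟩, hJ⟩ ⟨⟨I, τ⟩, hI⟩ heq
  simp only [Theta, Subtype.mk.injEq] at heq
  have hclasses : ∀ j j' : Fin d, cl hJ j = cl hJ j' ↔ cl hI j = cl hI j' := by
    intro j j'
    constructor
    · intro h
      have h1 : σ (cl hJ j) = σ (cl hJ j') := by rw [h]
      rw [show σ (cl hJ j) = τ (cl hI j) from congrFun heq j,
        show σ (cl hJ j') = τ (cl hI j') from congrFun heq j'] at h1
      exact τ.injective h1
    · intro h
      have h1 : τ (cl hI j) = τ (cl hI j') := by rw [h]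
      rw [← show σ (cl hJ j) = τ (cl hI j) from congrFun heq j,
        ← show σ (cl hJ j') = τ (cl hI j') from congrFun heq j'] at h1
      exact σ.injective h1
  have hJI : J = I := classes_eq hJ hI hclasses
  subst hJI
  have hστ : σ = τ := by
    refine Equiv.ext fun i => ?_
    obtain ⟨j, hj⟩ := cl_surj hJ i
    have h1 : σ (cl hJ j) = τ (cl hI j) := congrFun heq j
    have h2 : cl hJ j = cl hI j := Fin.ext rfl
    rw [hj] at h1
    exact h1
  subst hστ
  rfl

lemma Theta_surj (d l : ℕ) : Function.Surjective (Theta d l) := by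
  rintro ⟨f, hf⟩
  classical
  set J : Finset (Finset (Fin d)) :=
    Finset.univ.image (fun v : Fin l => Finset.univ.filter (fun j => f j = v)) with hJdef
  have fib_mem : ∀ v : Fin l, Finset.univ.filter (fun j => f j = v) ∈ J :=
    fun v => Finset.mem_image_of_mem _ (Finset.mem_univ v)
  have fib_inj : Function.Injective (fun v : Fin l => Finset.univ.filter (fun j => f j = v)) := by
    intro v w hvw
    replace hvw : Finset.univ.filter (fun j => f j = v) = Finset.univ.filter (fun j => f j = w) :=
      hvw
    obtain ⟨j, hj⟩ := hf v
    have h1 : j ∈ Finset.univ.filter (fun j => f j = v) :=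
      Finset.mem_filter.mpr ⟨Finset.mem_univ j, hj⟩
    rw [hvw] at h1
    rw [← hj]
    exact (Finset.mem_filter.mp h1).2
  have hJ : IsPartitionInto d l J := by
    refine ⟨?_, ?_, ?_⟩
    · rw [hJdef, Finset.card_image_of_injective _ fib_inj, Finset.card_univ, Fintype.card_fin]
    · intro A hA
      obtain ⟨v, _, rfl⟩ := Finset.mem_image.mp hA
      obtain ⟨j, hj⟩ := hf v
      exact ⟨j, Finset.mem_filter.mpr ⟨Finset.mem_univ j, hj⟩⟩
    · intro j
      refine ⟨Finset.univ.filter (fun j' => f j' = f j),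
        ⟨fib_mem (f j), Finset.mem_filter.mpr ⟨Finset.mem_univ j, rfl⟩⟩, ?_⟩
      rintro B ⟨hB, hjB⟩
      obtain ⟨v, _, rfl⟩ := Finset.mem_image.mp hB
      have : f j = v := (Finset.mem_filter.mp hjB).2
      rw [this]
  have partOf_eq : ∀ j : Fin d, Finset.univ.filter (fun j' => f j' = f j) = partOf J j :=
    fun j => partOf_unique hJ (fib_mem (f j)) (Finset.mem_filter.mpr ⟨Finset.mem_univ j, rfl⟩)
  have key : ∀ j j' : Fin d, cl hJ j = cl hJ j' ↔ f j = f j' := by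
    intro j j'
    rw [cl_eq_iff hJ, ← partOf_eq j, ← partOf_eq j']
    constructor
    · intro h
      exact fib_inj h
    · intro h
      rw [h]
  choose jj hjj using cl_surj hJ
  set s : Fin l → Fin l := fun i => f (jj i) with hsdef
  have s_inj : Function.Injective s := by
    intro i i' h
    rw [← hjj i, ← hjj i']
    exact (key _ _).mpr h
  refine ⟨⟨(J, Equiv.ofBijective s (Finite.injective_iff_bijective.mp s_inj)), hJ⟩,
    Subtype.ext ?_⟩
  funext j
  show s (cl hJ j) = f j
  exact (key _ _).mp (hjj (cl hJ j))

end Aux13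

/-- If `|T| ≥ l`, distinct index pairs `(I, σ) ≠ (J, τ)` yield distinct simplices, and
consequently the number of `l`-dimensional simplices in `T^d` is `l! ⬝ S(d,l)`. -/
theorem stmt13 (d l : ℕ) (hl : l ∈ Finset.Icc 1 d) (T : Finset ℕ) (hT : l ≤ T.card) :
    (∀ (I J : Finset (Finset (Fin d))) (σ τ : Equiv.Perm (Fin l)),
      IsPartitionInto d l I → IsPartitionInto d l J → ¬(I = J ∧ σ = τ) →
      simplexSet d l I σ T ≠ simplexSet d l J τ T) ∧
    Set.ncard { S : Set (Fin d → ℕ) | ∃ (J : Finset (Finset (Fin d))) (σ : Equiv.Perm (Fin l)),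
        IsPartitionInto d l J ∧ S = simplexSet d l J σ T } = l.factorial * stirling2 d l := by
  constructor
  · intro I J σ τ hI hJ hne heq
    exact hne (Aux13.simplex_inj hI hJ hT heq)
  · set F : Finset (Finset (Fin d)) × Equiv.Perm (Fin l) → Set (Fin d → ℕ) :=
      fun p => simplexSet d l p.1 p.2 T with hFdef
    set Q : Set (Finset (Finset (Fin d)) × Equiv.Perm (Fin l)) :=
      {p | IsPartitionInto d l p.1} with hQdef
    have hset : { S : Set (Fin d → ℕ) | ∃ (J : Finset (Finset (Fin d)))
        (σ : Equiv.Perm (Fin l)), IsPartitionInto d l J ∧ S = simplexSet d l J σ T }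
        = F '' Q := by
      ext S
      constructor
      · rintro ⟨J, σ, hJ, rfl⟩
        exact ⟨(J, σ), hJ, rfl⟩
      · rintro ⟨⟨J, σ⟩, hJ, rfl⟩
        exact ⟨J, σ, hJ, rfl⟩
    have hinjOn : Set.InjOn F Q := by
      intro p hp q hq hFpq
      obtain ⟨h1, h2⟩ := Aux13.simplex_inj hp hq hT hFpq
      exact Prod.ext h1 h2
    rw [hset, Set.ncard_image_of_injOn hinjOn, ← Nat.card_coe_set_eq]
    have hbij : Nat.card ↥Q = Nat.card {f : Fin d → Fin l // Function.Surjective f} :=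
      Nat.card_eq_of_bijective (Aux13.Theta d l) ⟨Aux13.Theta_inj d l, Aux13.Theta_surj d l⟩
    rw [hbij, Aux13.surjCard]
end

section
/- Let c ≥ 2, m ≥ 1, and n ≥ c·m be natural numbers, and let K = ([n], C([n], m)) be the complete m-uniform hypergraph on [n], whose hyperedges are all m-element subsets of [n]. Then disc(K, c) = (1 − 1/c)·m. -/
/-- The complete `m`-uniform hypergraph on `[n]` with `n ≥ c·m` has `c`-color
discrepancy `(1 - 1/c) ⬝ m`. -/
theorem stmt15 (c m n : ℕ) (hc : 2 ≤ c) (hm : 1 ≤ m) (hn : c * m ≤ n) :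
    disc ((Finset.univ : Finset (Fin n)).powersetCard m) c = (1 - 1 / (c : ℝ)) * m := by
  haveI : NeZero c := ⟨by omega⟩
  haveI : Nonempty (Fin c) := ⟨⟨0, by omega⟩⟩
  set H : Finset (Finset (Fin n)) := (Finset.univ : Finset (Fin n)).powersetCard m with hH
  set r : ℝ := (1 - 1 / (c : ℝ)) * m with hrdef
  have hcR : (2:ℝ) ≤ (c:ℝ) := by exact_mod_cast hc
  have hcpos : (0:ℝ) < c := by linarith
  have hmR : (1:ℝ) ≤ (m:ℝ) := by exact_mod_cast hm
  have hrm : r = (m:ℝ) - (m:ℝ) / c := by rw [hrdef]; field_simp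
  have hmc : 2 * ((m:ℝ)/c) ≤ m := by
    have h2 : 2 * ((m:ℝ)/c) = (2*m)/c := by ring
    rw [h2, div_le_iff₀ hcpos]
    nlinarith
  have hr0 : 0 ≤ r := by
    rw [hrm]; nlinarith [div_nonneg (by positivity : (0:ℝ) ≤ (m:ℝ)) hcpos.le]
  have key : ∀ χ : Fin n → Fin c, discCol H c χ = r := by
    intro χ
    apply le_antisymm
    · apply Real.iSup_le _ hr0
      intro E
      apply Real.iSup_le _ hr0
      intro hE
      have hEc : E.card = m := (Finset.mem_powersetCard.mp hE).2
      apply ciSup_le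
      intro i
      have h1 : ((E.filter fun v => χ v = i).card : ℝ) ≤ m := by
        have := Finset.card_filter_le E (fun v => χ v = i)
        rw [hEc] at this; exact_mod_cast this
      have h0 : (0:ℝ) ≤ ((E.filter fun v => χ v = i).card : ℝ) := by positivity
      rw [hEc, abs_le, hrm]
      constructor <;> linarith
    · -- lower bound: find a color class of size ≥ m
      obtain ⟨i, hi⟩ : ∃ i : Fin c, m ≤ ((Finset.univ : Finset (Fin n)).filter
          fun v => χ v = i).card := by
        by_contra hcon
        push_neg at hcon
        have hsum : (Finset.univ : Finset (Fin n)).card =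
            ∑ i : Fin c, ((Finset.univ : Finset (Fin n)).filter fun v => χ v = i).card :=
          Finset.card_eq_sum_card_fiberwise (fun x _ => Finset.mem_univ (χ x))
        have hle : ∑ i : Fin c, ((Finset.univ : Finset (Fin n)).filter
            fun v => χ v = i).card ≤ ∑ _i : Fin c, (m - 1) :=
          Finset.sum_le_sum fun i _ => by have := hcon i; omega
        rw [Finset.card_univ, Fintype.card_fin] at hsum
        rw [Finset.sum_const, Finset.card_univ, Fintype.card_fin, smul_eq_mul] at hle
        have heq : c * (m - 1) + c = c * m := by
          have h1 : (m - 1) + 1 = m := by omega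
          rw [← Nat.mul_succ, Nat.succ_eq_add_one, h1]
        have := hn
        omega
      obtain ⟨E, hEsub, hEc⟩ := Finset.exists_subset_card_eq hi
      have hEH : E ∈ H := by
        rw [hH, Finset.mem_powersetCard_univ]; exact hEc
      have hfil : E.filter (fun v => χ v = i) = E := by
        apply Finset.filter_true_of_mem
        intro v hv
        have := hEsub hv
        simpa using (Finset.mem_filter.mp this).2
      have hval : |((E.filter fun v => χ v = i).card : ℝ) - (E.card : ℝ) / c| = r := by
        rw [hfil, hEc, hrm, abs_of_nonneg (by linarith)]
      -- chain of le_ciSup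
      have b1 : r ≤ ⨆ j : Fin c, |((E.filter fun v => χ v = j).card : ℝ) - (E.card : ℝ) / c| := by
        rw [← hval]
        exact le_ciSup (f := fun j : Fin c =>
          |((E.filter fun v => χ v = j).card : ℝ) - (E.card : ℝ) / c|)
          (Set.Finite.bddAbove (Set.finite_range _)) i
      have b2 : (⨆ j : Fin c, |((E.filter fun v => χ v = j).card : ℝ) - (E.card : ℝ) / c|) ≤
          ⨆ _ : E ∈ H, ⨆ j : Fin c, |((E.filter fun v => χ v = j).card : ℝ) - (E.card : ℝ) / c| := by
        apply le_ciSup (f := fun _ : E ∈ H =>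
          ⨆ j : Fin c, |((E.filter fun v => χ v = j).card : ℝ) - (E.card : ℝ) / c|) _ hEH
        exact ⟨_, by rintro x ⟨h, rfl⟩; exact le_rfl⟩
      have b3 : (⨆ _ : E ∈ H, ⨆ j : Fin c,
            |((E.filter fun v => χ v = j).card : ℝ) - (E.card : ℝ) / c|) ≤ discCol H c χ := by
        unfold discCol
        exact le_ciSup (f := fun E' : Finset (Fin n) => ⨆ _ : E' ∈ H, ⨆ j : Fin c,
          |((E'.filter fun v => χ v = j).card : ℝ) - (E'.card : ℝ) / c|)
          (Set.Finite.bddAbove (Set.finite_range _)) E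
      linarith
  unfold disc
  have : (fun χ : Fin n → Fin c => discCol H c χ) = fun _ => r := funext key
  rw [this]
  exact ciInf_const
end
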